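/- arXiv:2010.10264 — 2 statements merged into one kernel-verified Lean document; each statement's English description precedes it below -/
import Mathlib

section
/- The splitting field of the polynomial x⁵ - 48x⁴ + 632x³ - 3600x² + 9472x - 9472 over ℚ is not an abelian extension of ℚ; equivalently (by the Kronecker–Weber theorem), at least one of its roots is not a cyclotomic number. -/
/-!
The polynomial factors as `(X - 4)² · g` with `g = X³ - 40X² + 296X - 592`, and `g` has no root
modulo 3, so it is irreducible over `ℚ`. If the Galois group were abelian, so would be that of `g`;
an abelian group acting faithfully and transitively on the three roots of `g` acts simply
transitively, so the splitting field of `g` would have degree 3. But it contains a square root of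
the discriminant `1600768 = 208² · 37`, which is not a rational square, so its degree is even.
-/

open Polynomial Module

namespace MulAction

variable {G X : Type*} [Group G] [MulAction G X] [FaithfulSMul G X] [IsPretransitive G X]
  [IsMulCommutative G]

theorem stabilizer_eq_bot_of_isMulCommutative (x : X) : stabilizer G x = ⊥ := by
  refine (Subgroup.eq_bot_iff_forall _).mpr fun g hg => eq_of_smul_eq_smul (α := X) fun y => ?_
  obtain ⟨h, rfl⟩ := exists_smul_eq G x y
  rw [one_smul, smul_smul, mul_comm' g h, mul_smul, mem_stabilizer_iff.mp hg]

theorem card_eq_card_of_isMulCommutative [Nonempty X] : Nat.card G = Nat.card X := by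
  obtain ⟨x⟩ := ‹Nonempty X›
  rw [← index_stabilizer_of_transitive G x, stabilizer_eq_bot_of_isMulCommutative x,
    Subgroup.index_bot]

end MulAction

namespace Polynomial.Gal

variable {F : Type*} [Field F] {p q : F[X]}

instance faithfulSMul (E : Type*) [Field E] [Algebra F E]
    [Fact ((p.map (algebraMap F E)).Splits)] : FaithfulSMul p.Gal (p.rootSet E) :=
  ⟨fun h => galActionHom_injective p E (Equiv.ext h)⟩

theorem isMulCommutative_of_dvd (hpq : p ∣ q) (hq : q ≠ 0) [IsMulCommutative q.Gal] :
    IsMulCommutative p.Gal := by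
  refine isMulCommutative_iff.mpr fun σ τ => ?_
  obtain ⟨σ, rfl⟩ := restrictDvd_surjective hpq hq σ
  obtain ⟨τ, rfl⟩ := restrictDvd_surjective hpq hq τ
  rw [← map_mul, ← map_mul, mul_comm' σ τ]

theorem card_eq_natDegree_of_isMulCommutative [IsMulCommutative p.Gal] (hp : Irreducible p)
    (hsep : p.Separable) : Nat.card p.Gal = p.natDegree := by
  -- Roots are taken in the algebraic closure: on `p.SplittingField` itself the two actions
  -- `galActionAux` and `galAction` of `p.Gal` on the roots compete and do not unify.
  let E := AlgebraicClosure F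
  have hsplits : (p.map (algebraMap F E)).Splits := IsAlgClosed.splits _
  have : Fact ((p.map (algebraMap F E)).Splits) := ⟨hsplits⟩
  have : MulAction.IsPretransitive p.Gal (p.rootSet E) := galAction_isPretransitive p E hp
  have hcard : Nat.card (p.rootSet E) = p.natDegree := by
    rw [Nat.card_eq_fintype_card, card_rootSet_eq_natDegree hsep hsplits]
  have : Nonempty (p.rootSet E) := (Nat.card_pos_iff.mp (hcard ▸ hp.natDegree_pos)).1
  rw [← hcard]
  exact MulAction.card_eq_card_of_isMulCommutative

end Polynomial.Gal

theorem two_dvd_finrank_of_sq_eq_algebraMap {F K : Type*} [Field F] [Field K] [Algebra F K]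
    [FiniteDimensional F K] {c : F} (hc : ¬IsSquare c) {δ : K} (hδ : δ ^ 2 = algebraMap F K c) :
    2 ∣ finrank F K := by
  have hirr : Irreducible (X ^ 2 - C c) :=
    X_pow_sub_C_irreducible_of_prime Nat.prime_two fun b hb => hc ⟨b, by rw [← hb, sq]⟩
  have hmin : X ^ 2 - C c = minpoly F δ :=
    minpoly.eq_of_irreducible_of_monic hirr (by simp [hδ]) (monic_X_pow_sub_C _ two_ne_zero)
  simpa [← hmin] using minpoly.degree_dvd (IsIntegral.of_finite F δ)

theorem Cubic.two_dvd_finrank_of_not_isSquare_discr {F K : Type*} [Field F] [Field K]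
    [Algebra F K] [FiniteDimensional F K] {P : Cubic F} (ha : P.a ≠ 0)
    (hP : (P.toPoly.map (algebraMap F K)).Splits) (hd : ¬IsSquare P.discr) :
    2 ∣ finrank F K := by
  obtain ⟨x, y, z, h3⟩ := (splits_iff_roots_eq_three ha).mp hP
  exact two_dvd_finrank_of_sq_eq_algebraMap hd (discr_eq_prod_three_roots ha h3).symm

theorem Polynomial.Monic.irreducible_map_rat_of_forall_eval_zmod_ne_zero {p : ℤ[X]}
    (hp : p.Monic) (h2 : 2 ≤ p.natDegree) (h3 : p.natDegree ≤ 3) {n : ℕ}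
    (hn : ∀ x : ZMod n, (p.map (Int.castRingHom (ZMod n))).eval x ≠ 0) :
    Irreducible (p.map (Int.castRingHom ℚ)) := by
  have hdeg : (p.map (Int.castRingHom ℚ)).natDegree = p.natDegree := hp.natDegree_map _
  rw [← hdeg] at h2 h3
  rw [(hp.map _).irreducible_iff_roots_eq_zero_of_degree_le_three h2 h3]
  refine Multiset.eq_zero_of_forall_notMem fun r hr => ?_
  rw [mem_roots (hp.map _).ne_zero, IsRoot, eval_map, ← algebraMap_int_eq, ← aeval_def] at hr
  obtain ⟨m, rfl, -⟩ := exists_integer_of_is_root_of_monic hp hr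
  have hm : p.eval m = 0 := by
    rwa [aeval_algebraMap_apply, coe_aeval_eq_eval, algebraMap_int_eq, eq_intCast,
      Int.cast_eq_zero] at hr
  exact hn m (by rw [eval_intCast_map, Int.cast_id, hm, map_zero])

def codegreeCubic : Cubic ℤ := ⟨1, -40, 296, -592⟩

theorem codegreeCubic_toPoly : codegreeCubic.toPoly = X ^ 3 - 40 * X ^ 2 + 296 * X - 592 := by
  simp only [codegreeCubic, Cubic.toPoly, map_one, map_neg, map_ofNat C, one_mul]
  ring

theorem codegreeCubic_irreducible :
    Irreducible (codegreeCubic.map (Int.castRingHom ℚ)).toPoly := by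
  have hdeg : codegreeCubic.toPoly.natDegree = 3 := Cubic.natDegree_of_a_ne_zero one_ne_zero
  rw [Cubic.map_toPoly]
  refine (Cubic.monic_of_a_eq_one rfl).irreducible_map_rat_of_forall_eval_zmod_ne_zero
    (by omega) (by omega) (n := 3) fun x => ?_
  simp only [codegreeCubic_toPoly, Polynomial.map_sub, Polynomial.map_add, Polynomial.map_mul,
    Polynomial.map_pow, map_X, Polynomial.map_ofNat, eval_sub, eval_add, eval_mul, eval_pow,
    eval_X, eval_ofNat]
  revert x
  decide

theorem not_isSquare_codegreeCubic_discr :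
    ¬IsSquare (codegreeCubic.map (Int.castRingHom ℚ)).discr := by
  have : (codegreeCubic.map (Int.castRingHom ℚ)).discr = ((1600768 : ℕ) : ℚ) := by
    norm_num [codegreeCubic, Cubic.discr, Cubic.map]
  rw [this, Rat.isSquare_natCast_iff]
  rintro ⟨r, hr⟩
  -- `1600768 ≡ 3 (mod 5)` is not a square modulo 5.
  have hr5 := congrArg (Nat.cast : ℕ → ZMod 5) hr
  push_cast at hr5
  revert hr5
  generalize (r : ZMod 5) = m
  revert m
  decide

theorem codegree_poly_eq_mul_codegreeCubic :
    (X ^ 5 - 48 * X ^ 4 + 632 * X ^ 3 - 3600 * X ^ 2 + 9472 * X - 9472 : ℚ[X]) =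
      (X - C 4) ^ 2 * (codegreeCubic.map (Int.castRingHom ℚ)).toPoly := by
  simp only [Cubic.map_toPoly, codegreeCubic_toPoly, Polynomial.map_sub, Polynomial.map_add,
    Polynomial.map_mul, Polynomial.map_pow, map_X, Polynomial.map_ofNat, map_ofNat C]
  ring

/-- The splitting field of x⁵ - 48x⁴ + 632x³ - 3600x² + 9472x - 9472 over ℚ is
not an abelian extension of ℚ, i.e. its Galois group is not commutative. -/
theorem rank5_codegree_poly_not_abelian :
    ¬ ∀ σ τ : (X ^ 5 - 48 * X ^ 4 + 632 * X ^ 3 - 3600 * X ^ 2 + 9472 * X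
        - 9472 : ℚ[X]).Gal, σ * τ = τ * σ := by
  rw [codegree_poly_eq_mul_codegreeCubic]
  intro hcomm
  set g := (codegreeCubic.map (Int.castRingHom ℚ)).toPoly
  have hg : Irreducible g := codegreeCubic_irreducible
  have : IsMulCommutative ((X - C 4) ^ 2 * g).Gal := isMulCommutative_iff.mpr hcomm
  have : IsMulCommutative g.Gal := Gal.isMulCommutative_of_dvd (dvd_mul_left g ((X - C 4) ^ 2))
    (mul_ne_zero (pow_ne_zero _ (X_sub_C_ne_zero 4)) hg.ne_zero)
  have hdeg3 : finrank ℚ g.SplittingField = 3 := by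
    rw [← Gal.card_of_separable hg.separable,
      Gal.card_eq_natDegree_of_isMulCommutative hg hg.separable,
      Cubic.natDegree_of_a_ne_zero one_ne_zero]
  have hdeg2 : 2 ∣ finrank ℚ g.SplittingField :=
    Cubic.two_dvd_finrank_of_not_isSquare_discr one_ne_zero (SplittingField.splits g)
      not_isSquare_codegreeCubic_discr
  omega
end

section
/- For the rank-6 simple fusion ring with formal codegrees (65+17√13)/2, 9 (multiplicity 4), (65-17√13)/2: the ratio ((65+17√13)/2)/9 = (65+17√13)/18 is not an algebraic integer, hence this fusion ring admits no complex categorification by the Drinfeld center criterion. -/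
/-!
If `x = (65 + 17√13)/18` were an algebraic integer, then, `ℤ` being integrally closed, its minimal
polynomial over `ℚ` would have integer coefficients. But `x` is irrational and a root of
`X² - (65/9) X + 13/9`, so this quadratic is its minimal polynomial, and `13/9` is not an integer.
-/

open Polynomial

theorem minpoly.eq_of_natDegree_eq_two {K B : Type*} [Field K] [Ring B] [Nontrivial B]
    [Algebra K B] {x : B} {p : K[X]} (hp : p.Monic) (hdeg : p.natDegree = 2)
    (hroot : Polynomial.aeval x p = 0) (hx : x ∉ (algebraMap K B).range) : minpoly K x = p := by
  have hint : IsIntegral K x := ⟨p, hp, hroot⟩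
  refine (eq_of_monic_of_dvd_of_natDegree_le (minpoly.monic hint) hp
    (minpoly.dvd K x hroot) ?_).symm
  rw [hdeg]
  exact (minpoly.two_le_natDegree_iff hint).mpr hx

theorem minpoly.coeff_mem_range_of_isIntegral {R K S : Type*} [CommRing R] [IsDomain R]
    [IsIntegrallyClosed R] [Field K] [Algebra R K] [IsFractionRing R K] [CommRing S] [IsDomain S]
    [Algebra R S] [Algebra K S] [IsScalarTower R K S] {s : S} (hs : IsIntegral R s) (i : ℕ) :
    (minpoly K s).coeff i ∈ (algebraMap R K).range := by
  rw [minpoly.isIntegrallyClosed_eq_field_fractions' K hs, coeff_map]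
  exact ⟨_, rfl⟩

/-- For the rank-6 simple fusion ring with formal codegrees (65+17√13)/2,
9 (multiplicity 4), (65-17√13)/2, the ratio ((65+17√13)/2)/9 = (65+17√13)/18
is not an algebraic integer; hence by the Drinfeld center criterion this fusion
ring admits no complex categorification. -/
theorem rank6_simple_fails_drinfeld :
    ((65 + 17 * Real.sqrt 13) / 2) / 9 = (65 + 17 * Real.sqrt 13) / 18 ∧
    ¬ IsIntegral ℤ ((65 + 17 * Real.sqrt 13) / 18) := by
  refine ⟨by ring, fun hint => ?_⟩
  set x : ℝ := (65 + 17 * √13) / 18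
  have hirr : Irrational x := by
    have h : Irrational √(13 : ℕ) := (by norm_num : Nat.Prime 13).irrational_sqrt
    simpa using ((h.natCast_mul (m := 17) (by norm_num)).natCast_add 65).div_natCast
      (m := 18) (by norm_num)
  have hroot : aeval x (X ^ 2 - C (65 / 9 : ℚ) * X + C (13 / 9)) = 0 := by
    have h13 : √13 ^ 2 = 13 := Real.sq_sqrt (by norm_num)
    simp only [map_add, map_sub, map_mul, map_pow, aeval_X, aeval_C, eq_ratCast]
    push_cast
    linear_combination (289 / 324 : ℝ) * h13
  have hmin : minpoly ℚ x = X ^ 2 - C (65 / 9 : ℚ) * X + C (13 / 9) :=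
    minpoly.eq_of_natDegree_eq_two (by monicity!) (by compute_degree!) hroot
      fun ⟨q, hq⟩ => hirr ⟨q, hq⟩
  obtain ⟨n, hn⟩ := minpoly.coeff_mem_range_of_isIntegral (K := ℚ) hint 0
  rw [hmin] at hn
  norm_num at hn
  have h9n : 9 * n = 13 := by exact_mod_cast (by rw [hn]; norm_num : (9 * n : ℚ) = 13)
  omega
end
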